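/- Let M₁(a) denote the number of pairs (n,k) of positive integers with 1 ≤ k ≤ n such that the unsigned Stirling number of the first kind c(n,k) equals a. For every integer a ≥ 2 and every positive integer b such that (b/2)^b > a, one has M₁(a) ≤ 2b. -/

import Mathlib

/-!
Write a solution as `(n, k) = (k + m, k)`. Since `c(n, n) = 1 < a`, we have `m ≥ 1`. Along the
diagonal `n - k = m`, the value `c(k + m, k)` starts at `c(m + 1, 1) = m!` and is strictly
increasing in `k`, so each `m` contributes at most one solution, and `m! ≤ a`. Finally
`a < (b/2)^b ≤ b^b ≤ (2b)!` forces `m < 2b`.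
-/

/-- Unsigned Stirling numbers of the first kind, defined by the standard recurrence. -/
def stirling1 : ℕ → ℕ → ℕ
  | 0, 0 => 1
  | 0, _ + 1 => 0
  | _ + 1, 0 => 0
  | n + 1, k + 1 => stirling1 n k + n * stirling1 n (k + 1)

/-- `M₁ a` is the number of pairs `(n, k)` with `1 ≤ k ≤ n` and `c(n, k) = a`. -/
noncomputable def M1 (a : ℕ) : ℕ :=
  Nat.card {p : ℕ × ℕ // 1 ≤ p.2 ∧ p.2 ≤ p.1 ∧ stirling1 p.1 p.2 = a}

open Nat

lemma stirling1_succ_succ (n k : ℕ) :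
    stirling1 (n + 1) (k + 1) = stirling1 n k + n * stirling1 n (k + 1) := rfl

lemma stirling1_eq_zero_of_lt {n k : ℕ} (h : n < k) : stirling1 n k = 0 := by
  induction n generalizing k with
  | zero => obtain ⟨k, rfl⟩ := Nat.exists_eq_add_one_of_ne_zero (by omega : k ≠ 0); rfl
  | succ n ih =>
    obtain ⟨k, rfl⟩ := Nat.exists_eq_add_one_of_ne_zero (by omega : k ≠ 0)
    rw [stirling1_succ_succ, ih (by omega), ih (by omega), mul_zero, add_zero]

lemma stirling1_self (n : ℕ) : stirling1 n n = 1 := by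
  induction n with
  | zero => rfl
  | succ n ih =>
    rw [stirling1_succ_succ, ih, stirling1_eq_zero_of_lt n.lt_succ_self, mul_zero, add_zero]

lemma stirling1_pos {n k : ℕ} (hk : 1 ≤ k) (hkn : k ≤ n) : 0 < stirling1 n k := by
  induction n generalizing k with
  | zero => omega
  | succ n ih =>
    obtain ⟨k, rfl⟩ := Nat.exists_eq_add_one_of_ne_zero (by omega : k ≠ 0)
    rw [stirling1_succ_succ]
    rcases Nat.eq_zero_or_pos k with rfl | hk
    · rcases Nat.eq_zero_or_pos n with rfl | hn
      · exact Nat.one_pos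
      · exact Nat.add_pos_right _ (Nat.mul_pos hn (ih le_rfl hn))
    · exact Nat.add_pos_left (ih hk (by omega)) _

lemma stirling1_succ_one (m : ℕ) : stirling1 (m + 1) 1 = m ! := by
  induction m with
  | zero => rfl
  | succ m ih =>
    rw [stirling1_succ_succ, ih, factorial_succ]
    exact Nat.zero_add _

lemma factorial_le_stirling1_add {k : ℕ} (m : ℕ) (hk : 1 ≤ k) : m ! ≤ stirling1 (k + m) k := by
  induction k, hk using Nat.le_induction with
  | base => rw [add_comm, stirling1_succ_one]
  | succ k _ ih =>
    rw [add_right_comm, stirling1_succ_succ]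
    exact ih.trans (Nat.le_add_right _ _)

lemma stirling1_add_strictMono {m : ℕ} (hm : 1 ≤ m) : StrictMono fun k ↦ stirling1 (k + m) k := by
  refine strictMono_nat_of_lt_succ fun k ↦ ?_
  have hpos : 0 < (k + m) * stirling1 (k + m) (k + 1) :=
    Nat.mul_pos (by omega) (stirling1_pos (by omega) (by omega))
  simp only [add_right_comm k 1 m, stirling1_succ_succ]
  omega

lemma pow_self_le_factorial_two_mul (b : ℕ) : b ^ b ≤ (2 * b)! :=
  calc b ^ b ≤ (b + 1) ^ b := Nat.pow_le_pow_left b.le_succ b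
    _ ≤ b ! * (b + 1) ^ b := Nat.le_mul_of_pos_left _ b.factorial_pos
    _ ≤ (b + b)! := factorial_mul_pow_le_factorial
    _ = (2 * b)! := by rw [two_mul]

lemma lt_of_one_lt_stirling1 {n k : ℕ} (hkn : k ≤ n) (h : 1 < stirling1 n k) : k < n :=
  hkn.lt_of_ne fun hkn ↦ by rw [hkn, stirling1_self] at h; exact h.false

lemma factorial_sub_le_stirling1 {n k : ℕ} (hk : 1 ≤ k) (hkn : k ≤ n) :
    (n - k)! ≤ stirling1 n k := by
  simpa only [Nat.add_sub_cancel' hkn] using factorial_le_stirling1_add (n - k) hk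

lemma eq_of_stirling1_eq_of_sub_eq {n₁ k₁ n₂ k₂ : ℕ} (h₁ : k₁ < n₁) (h₂ : k₂ ≤ n₂)
    (hsub : n₁ - k₁ = n₂ - k₂) (hs : stirling1 n₁ k₁ = stirling1 n₂ k₂) : n₁ = n₂ ∧ k₁ = k₂ := by
  obtain ⟨m, rfl, rfl⟩ : ∃ m, n₁ = k₁ + m ∧ n₂ = k₂ + m := ⟨n₁ - k₁, by omega, by omega⟩
  have hk : k₁ = k₂ := (stirling1_add_strictMono (by omega)).injective hs
  exact ⟨by rw [hk], hk⟩

theorem M1_le_of_pow_gt_general (a b : ℕ) (ha : 2 ≤ a)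
    (h : (a : ℝ) < ((b : ℝ) / 2) ^ b) : M1 a ≤ 2 * b := by
  have ha_lt : a < (2 * b)! := by
    have hb : ((b : ℝ) / 2) ^ b ≤ (b : ℝ) ^ b := by
      gcongr
      exact half_le_self b.cast_nonneg
    have : a < b ^ b := by exact_mod_cast h.trans_le hb
    exact this.trans_le (pow_self_le_factorial_two_mul b)
  have hsol : ∀ {n k : ℕ}, 1 ≤ k → k ≤ n → stirling1 n k = a → k < n ∧ n - k < 2 * b :=
    fun hk hkn hs ↦
      have hlt := lt_of_one_lt_stirling1 hkn (by omega)
      ⟨hlt, (factorial_lt (by omega)).1 <|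
        (factorial_sub_le_stirling1 hk hkn).trans_lt (hs ▸ ha_lt)⟩
  let diag : {p : ℕ × ℕ // 1 ≤ p.2 ∧ p.2 ≤ p.1 ∧ stirling1 p.1 p.2 = a} → Fin (2 * b) :=
    fun p ↦ ⟨p.1.1 - p.1.2 - 1, by have := hsol p.2.1 p.2.2.1 p.2.2.2; omega⟩
  have hdiag : Function.Injective diag := by
    rintro ⟨⟨n₁, k₁⟩, hk₁, hkn₁, hs₁⟩ ⟨⟨n₂, k₂⟩, hk₂, hkn₂, hs₂⟩ hm
    have hlt₁ := (hsol hk₁ hkn₁ hs₁).1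
    have hlt₂ := (hsol hk₂ hkn₂ hs₂).1
    simp only [diag, Fin.mk.injEq] at hm
    obtain ⟨rfl, rfl⟩ := eq_of_stirling1_eq_of_sub_eq hlt₁ hkn₂ (by omega) (hs₁.trans hs₂.symm)
    rfl
  simpa [M1] using Nat.card_le_card_of_injective diag hdiag

/-- If `a ≥ 2` and `b ≥ 1` satisfies `(b/2)^b > a`, then `M₁(a) ≤ 2b`. -/
theorem M1_le_of_pow_gt (a b : ℕ) (ha : 2 ≤ a) (hb : 1 ≤ b)
    (h : (a : ℝ) < ((b : ℝ) / 2) ^ b) : M1 a ≤ 2 * b :=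
  M1_le_of_pow_gt_general a b ha h
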